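/- For every integer k ≥ 1, consider the polynomial f = z² + y⁵ + (t₀^k − t₁^k)·x₀⁹x₁ + (t₀^{100k} + t₁^{100k})·x₁¹⁰ in ℂ[t₀,t₁,x₀,x₁,y,z]. Then the set of points p ∈ ℂ⁶ at which f and all six of its partial derivatives vanish and which satisfy (t₀(p),t₁(p)) ≠ (0,0) and (x₀(p),x₁(p),y(p),z(p)) ≠ (0,0,0,0) is exactly the set { (t₀,t₁,x₀,0,0,0) ∈ ℂ⁶ : t₀^k = t₁^k, (t₀,t₁) ≠ (0,0), x₀ ≠ 0 }. -/
import Mathlib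


open MvPolynomial

/-- Coordinates on `ℂ⁶`: `0 ↦ t₀`, `1 ↦ t₁`, `2 ↦ x₀`, `3 ↦ x₁`, `4 ↦ y`, `5 ↦ z`.
The polynomial `z² + y⁵ + (t₀^k − t₁^k)·x₀⁹x₁ + (t₀^(100k) + t₁^(100k))·x₁¹⁰`. -/
noncomputable def terminalPoly (k : ℕ) : MvPolynomial (Fin 6) ℂ :=
  X 5 ^ 2 + X 4 ^ 5 + (X 0 ^ k - X 1 ^ k) * (X 2 ^ 9 * X 3) +
    (X 0 ^ (100 * k) + X 1 ^ (100 * k)) * X 3 ^ 10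

/-- The non-quasismooth locus of `z² + y⁵ + (t₀^k − t₁^k)·x₀⁹x₁ + (t₀^(100k)+t₁^(100k))·x₁¹⁰`
away from `{t₀ = t₁ = 0}` and `{x₀ = x₁ = y = z = 0}` is exactly
`{(t₀,t₁,x₀,0,0,0) : t₀^k = t₁^k, (t₀,t₁) ≠ (0,0), x₀ ≠ 0}`. -/
theorem nonquasismooth_locus (k : ℕ) (hk : 1 ≤ k) :
    {p : Fin 6 → ℂ | MvPolynomial.eval p (terminalPoly k) = 0 ∧
      (∀ i : Fin 6, MvPolynomial.eval p (MvPolynomial.pderiv i (terminalPoly k)) = 0) ∧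
      ¬(p 0 = 0 ∧ p 1 = 0) ∧ ¬(p 2 = 0 ∧ p 3 = 0 ∧ p 4 = 0 ∧ p 5 = 0)} =
    {p : Fin 6 → ℂ | p 0 ^ k = p 1 ^ k ∧ ¬(p 0 = 0 ∧ p 1 = 0) ∧ p 2 ≠ 0 ∧
      p 3 = 0 ∧ p 4 = 0 ∧ p 5 = 0} := by
  have hk0 : (k : ℂ) ≠ 0 := Nat.cast_ne_zero.mpr (by omega)
  ext p
  simp only [Set.mem_setOf_eq]
  have ef : eval p (terminalPoly k) = p 5 ^ 2 + p 4 ^ 5 +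
      (p 0 ^ k - p 1 ^ k) * (p 2 ^ 9 * p 3) +
      (p 0 ^ (100 * k) + p 1 ^ (100 * k)) * p 3 ^ 10 := by
    simp [terminalPoly]
  have e0 : eval p (pderiv 0 (terminalPoly k)) =
      p 2 ^ 9 * p 3 * (k * p 0 ^ (k - 1)) + p 3 ^ 10 * (100 * k * p 0 ^ (100 * k - 1)) := by
    simp [terminalPoly, pderiv_X, Pi.single_apply]
  have e1 : eval p (pderiv 1 (terminalPoly k)) =
      -(p 2 ^ 9 * p 3 * (k * p 1 ^ (k - 1))) + p 3 ^ 10 * (100 * k * p 1 ^ (100 * k - 1)) := by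
    simp [terminalPoly, pderiv_X, Pi.single_apply]
  have e2 : eval p (pderiv 2 (terminalPoly k)) =
      (p 0 ^ k - p 1 ^ k) * (9 * p 2 ^ 8 * p 3) := by
    simp [terminalPoly, pderiv_X, Pi.single_apply]
    exact Or.inl (by ring)
  have e3 : eval p (pderiv 3 (terminalPoly k)) =
      (p 0 ^ k - p 1 ^ k) * p 2 ^ 9 + (p 0 ^ (100 * k) + p 1 ^ (100 * k)) * (10 * p 3 ^ 9) := by
    simp [terminalPoly, pderiv_X, Pi.single_apply]
  have e4 : eval p (pderiv 4 (terminalPoly k)) = 5 * p 4 ^ 4 := by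
    simp [terminalPoly, pderiv_X, Pi.single_apply]
  have e5 : eval p (pderiv 5 (terminalPoly k)) = 2 * p 5 := by
    simp [terminalPoly, pderiv_X, Pi.single_apply]
  constructor
  · rintro ⟨hf, hd, ht, hx⟩
    -- y = 0 and z = 0
    have h4 : p 4 = 0 := by
      have h := hd 4; rw [e4] at h
      have h' : p 4 ^ 4 = 0 := by
        rcases mul_eq_zero.mp h with h' | h'
        · exact absurd h' (by norm_num)
        · exact h'
      exact pow_eq_zero_iff (by norm_num) |>.mp h'
    have h5 : p 5 = 0 := by
      have h := hd 5; rw [e5] at h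
      rcases mul_eq_zero.mp h with h' | h'
      · exact absurd h' (by norm_num)
      · exact h'
    have hf' : (p 0 ^ k - p 1 ^ k) * (p 2 ^ 9 * p 3) +
        (p 0 ^ (100 * k) + p 1 ^ (100 * k)) * p 3 ^ 10 = 0 := by
      rw [ef, h4, h5] at hf; linear_combination hf
    have h3' := hd 3; rw [e3] at h3'
    have h0' := hd 0; rw [e0] at h0'
    have h1' := hd 1; rw [e1] at h1'
    -- x₁ = 0
    have h3 : p 3 = 0 := by
      by_contra h3ne
      have hB : p 0 ^ (100 * k) + p 1 ^ (100 * k) = 0 := by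
        have h9 : (9 : ℂ) * ((p 0 ^ (100 * k) + p 1 ^ (100 * k)) * p 3 ^ 10) = 0 := by
          linear_combination p 3 * h3' - hf'
        rcases (by simpa using h9 :
            p 0 ^ (100 * k) + p 1 ^ (100 * k) = 0 ∨ p 3 = 0) with h | h
        · exact h
        · exact absurd h h3ne
      by_cases h2 : p 2 = 0
      · -- then from ∂t₀, ∂t₁: t₀ = t₁ = 0, contradiction
        have hp0 : p 0 = 0 := by
          have : p 3 ^ 10 * (100 * (k : ℂ) * p 0 ^ (100 * k - 1)) = 0 := by
            rw [h2] at h0'; linear_combination h0'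
          rcases mul_eq_zero.mp this with h | h
          · exact absurd (pow_eq_zero_iff (by norm_num) |>.mp h) h3ne
          · rcases mul_eq_zero.mp h with h | h
            · exact absurd h (by simp [hk0])
            · exact pow_eq_zero_iff (by omega) |>.mp h
        have hp1 : p 1 = 0 := by
          have : p 3 ^ 10 * (100 * (k : ℂ) * p 1 ^ (100 * k - 1)) = 0 := by
            rw [h2] at h1'; linear_combination h1'
          rcases mul_eq_zero.mp this with h | h
          · exact absurd (pow_eq_zero_iff (by norm_num) |>.mp h) h3ne
          · rcases mul_eq_zero.mp h with h | h
            · exact absurd h (by simp [hk0])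
            · exact pow_eq_zero_iff (by omega) |>.mp h
        exact ht ⟨hp0, hp1⟩
      · -- p 2 ≠ 0 : then t₀^k = t₁^k, and B = 0 forces t₀ = t₁ = 0
        have hA : p 0 ^ k = p 1 ^ k := by
          have : (p 0 ^ k - p 1 ^ k) * (p 2 ^ 9 * p 3) = 0 := by
            linear_combination hf' - (p 3 ^ 10) * hB
          rcases mul_eq_zero.mp this with h | h
          · exact sub_eq_zero.mp h
          · rcases mul_eq_zero.mp h with h | h
            · exact absurd (pow_eq_zero_iff (by norm_num) |>.mp h) h2
            · exact absurd h h3ne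
        have hB2 : (2 : ℂ) * p 1 ^ (100 * k) = 0 := by
          have : p 0 ^ (100 * k) = p 1 ^ (100 * k) := by
            rw [show 100 * k = k * 100 by ring, pow_mul, pow_mul, hA]
          linear_combination hB - this
        have hp1 : p 1 = 0 :=
          pow_eq_zero_iff (n := 100 * k) (by omega) |>.mp (by
            have := mul_eq_zero.mp hB2
            rcases this with h | h
            · exact absurd h (by norm_num)
            · exact h)
        have hp0 : p 0 = 0 := pow_eq_zero_iff (n := k) (by omega) |>.mp (by
          rw [hA, hp1]; exact zero_pow (by omega))
        exact ht ⟨hp0, hp1⟩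
    -- with x₁ = 0: x₀ ≠ 0, and t₀^k = t₁^k
    have h2 : p 2 ≠ 0 := fun h => hx ⟨h, h3, h4, h5⟩
    have hA : p 0 ^ k = p 1 ^ k := by
      have : (p 0 ^ k - p 1 ^ k) * p 2 ^ 9 = 0 := by
        rw [h3] at h3'; linear_combination h3'
      rcases mul_eq_zero.mp this with h | h
      · exact sub_eq_zero.mp h
      · exact absurd (pow_eq_zero_iff (by norm_num) |>.mp h) h2
    exact ⟨hA, ht, h2, h3, h4, h5⟩
  · rintro ⟨hA, ht, h2, h3, h4, h5⟩
    refine ⟨?_, ?_, ht, fun h => h2 h.1⟩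
    · rw [ef, h3, h4, h5]; ring
    · intro i
      fin_cases i
      · show eval p (pderiv 0 (terminalPoly k)) = 0
        rw [e0, h3]; ring
      · show eval p (pderiv 1 (terminalPoly k)) = 0
        rw [e1, h3]; ring
      · show eval p (pderiv 2 (terminalPoly k)) = 0
        rw [e2, h3]; ring
      · show eval p (pderiv 3 (terminalPoly k)) = 0
        rw [e3, h3, sub_eq_zero.mpr hA]; ring
      · show eval p (pderiv 4 (terminalPoly k)) = 0
        rw [e4, h4]; ring
      · show eval p (pderiv 5 (terminalPoly k)) = 0
        rw [e5, h5]; ring
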